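/- arXiv:math/0412350 — 2 statements merged into one kernel-verified Lean document; each statement's English description precedes it below -/
import Mathlib

section
/- Let (Ω, ℱ, P) be a probability space, 𝒢' ⊆ 𝒢 two sub-σ-fields of ℱ, and X : Ω → ℝ^m, Y : Ω → ℝ^k random vectors such that Y is 𝒢-measurable. If E[f(X) | 𝒢] = E[f(X) | 𝒢'] a.s. for every bounded measurable f : ℝ^m → ℝ, then E[h(X,Y) | 𝒢] = E[h(X,Y) | 𝒢' ∨ σ(Y)] a.s. for every bounded measurable h : ℝ^m × ℝ^k → ℝ. -/
open MeasureTheory ProbabilityTheory Set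
open scoped ENNReal

noncomputable section

namespace SetIndexedMarkov

variable {T : Type*} [TopologicalSpace T] {Ω : Type*} [mΩ : MeasurableSpace Ω]

/-- `𝒜(u)`: the collection of all finite unions of sets in `𝒜`. -/
def Au (𝒜 : Set (Set T)) : Set (Set T) :=
  {B | ∃ s : Finset (Set T), ↑s ⊆ 𝒜 ∧ s.Nonempty ∧ B = ⋃₀ ↑s}

/-- `𝒞`: the collection of all sets of the form `A \ B` with `A ∈ 𝒜`, `B ∈ 𝒜(u)`. -/
def CC (𝒜 : Set (Set T)) : Set (Set T) :=
  {C | ∃ A ∈ 𝒜, ∃ B ∈ Au 𝒜, C = A \ B}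

/-- `∅' := ⋂ {A ∈ 𝒜 : A ≠ ∅}`, the minimal set of `𝒜`. -/
def emptyPrime (𝒜 : Set (Set T)) : Set T := ⋂₀ {A ∈ 𝒜 | A ≠ ∅}

/-- The standing structural assumptions on the indexing collection `𝒜`: a semilattice of
closed subsets of the compact Hausdorff space `T`, containing `∅` and `T`, closed under
arbitrary (nonempty) intersections, and containing no two disjoint nonempty sets. -/
structure IsIndexing (𝒜 : Set (Set T)) : Prop where
  closed : ∀ A ∈ 𝒜, IsClosed A
  empty_mem : ∅ ∈ 𝒜
  univ_mem : Set.univ ∈ 𝒜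
  sInter_mem : ∀ S ⊆ 𝒜, S.Nonempty → ⋂₀ S ∈ 𝒜
  no_disjoint : ∀ A ∈ 𝒜, ∀ B ∈ 𝒜, A.Nonempty → B.Nonempty → (A ∩ B).Nonempty

/-- The σ-field generated by a real random variable. -/
def sigOf (f : Ω → ℝ) : MeasurableSpace Ω := MeasurableSpace.comap f inferInstance

/-- The minimal filtration `ℱ_B = σ(X_A : A ∈ 𝒜, A ⊆ B)`. -/
def filt (𝒜 : Set (Set T)) (X : Set T → Ω → ℝ) (B : Set T) : MeasurableSpace Ω :=
  ⨆ A ∈ {A | A ∈ 𝒜 ∧ A ⊆ B}, sigOf (X A)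

/-- `G` and `H` are conditionally independent given `K` (under `P`):
`E[1_G 1_H | K] = E[1_G | K] ⬝ E[1_H | K]` a.s. for all `G`-, `H`-measurable sets. -/
def CondIndepGiven (P : Measure Ω) (G H K : MeasurableSpace Ω) : Prop :=
  ∀ g h : Set Ω, MeasurableSet[G] g → MeasurableSet[H] h →
    (P[((g ∩ h).indicator fun _ => (1 : ℝ)) | K]) =ᵐ[P]
      fun ω => (P[(g.indicator fun _ => (1 : ℝ)) | K]) ω *
        (P[(h.indicator fun _ => (1 : ℝ)) | K]) ω

/-- Every `X_B`, `B ∈ 𝒜(u)`, is a (measurable) random variable. -/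
def MeasOnAu (𝒜 : Set (Set T)) (X : Set T → Ω → ℝ) : Prop :=
  ∀ B ∈ Au 𝒜, Measurable (X B)

/-- The process `X` (viewed on `𝒜(u)`) is almost surely finitely additive, i.e. it is the
(a.s. unique) additive extension of its restriction to `𝒜`: it vanishes a.s. at `∅` and is
a.s. modular on the lattice `𝒜(u)`. -/
def AddExtension (𝒜 : Set (Set T)) (P : Measure Ω) (X : Set T → Ω → ℝ) : Prop :=
  (∀ᵐ ω ∂P, X ∅ ω = 0) ∧
    ∀ B ∈ Au 𝒜, ∀ B' ∈ Au 𝒜,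
      ∀ᵐ ω ∂P, X (B ∪ B') ω + X (B ∩ B') ω = X B ω + X B' ω

/-- `X` is set-Markov: for all `A ∈ 𝒜`, `B ∈ 𝒜(u)`, `ℱ_B ⟂ σ(X_{A∖B}) | σ(X_B)`,
where `X_{A∖B} = X_{A∪B} - X_B`. -/
def SetMarkov (𝒜 : Set (Set T)) (P : Measure Ω) (X : Set T → Ω → ℝ) : Prop :=
  ∀ A ∈ 𝒜, ∀ B ∈ Au 𝒜,
    CondIndepGiven P (filt 𝒜 X B) (sigOf fun ω => X (A ∪ B) ω - X B ω) (sigOf (X B))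

/-- A flow: an increasing map `f : [0,a] → 𝒜(u)`. -/
def IsFlow (𝒜 : Set (Set T)) (a : ℝ) (f : ℝ → Set T) : Prop :=
  (∀ t ∈ Set.Icc (0 : ℝ) a, f t ∈ Au 𝒜) ∧
    ∀ s t : ℝ, 0 ≤ s → s ≤ t → t ≤ a → f s ⊆ f t

/-- A continuous flow. -/
def IsContinuousFlow (𝒜 : Set (Set T)) (a : ℝ) (f : ℝ → Set T) : Prop :=
  IsFlow 𝒜 a f ∧
    (∀ t ∈ Set.Icc (0 : ℝ) a, ∀ u : ℕ → ℝ, (∀ n, u n ∈ Set.Icc t a) → Antitone u →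
      Filter.Tendsto u Filter.atTop (nhds t) → f t = ⋂ n, f (u n)) ∧
    (∀ t ∈ Set.Icc (0 : ℝ) a, ∀ u : ℕ → ℝ, (∀ n, u n ∈ Set.Icc 0 t) → Monotone u →
      Filter.Tendsto u Filter.atTop (nhds t) → f t = closure (⋃ n, f (u n)))

/-- A simple flow: a continuous flow starting at `∅'` which is piecewise `𝒜`-valued. -/
def IsSimpleFlow (𝒜 : Set (Set T)) (a : ℝ) (f : ℝ → Set T) : Prop :=
  IsContinuousFlow 𝒜 a f ∧ f 0 = emptyPrime 𝒜 ∧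
    ∃ (n : ℕ) (t : ℕ → ℝ) (g : ℕ → ℝ → Set T),
      0 < n ∧ t 0 = 0 ∧ t n = a ∧ (∀ i < n, t i < t (i + 1)) ∧
      (∀ i < n, ∀ s ∈ Set.Icc (t i) (t (i + 1)), g (i + 1) s ∈ 𝒜) ∧
      (∀ i < n, ∀ s u : ℝ, t i ≤ s → s ≤ u → u ≤ t (i + 1) → g (i + 1) s ⊆ g (i + 1) u) ∧
      (∀ i < n, ∀ s ∈ Set.Icc (t i) (t (i + 1)),
        f s = (⋃ j ∈ Finset.Icc 1 i, g j (t j)) ∪ g (i + 1) s)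

/-- A finite sub-semilattice of `𝒜`: a finite nonempty subfamily closed under intersection. -/
def IsSubSemilattice (𝒜 : Set (Set T)) (L : Finset (Set T)) : Prop :=
  ↑L ⊆ 𝒜 ∧ L.Nonempty ∧ ∀ A ∈ L, ∀ B ∈ L, A ∩ B ∈ L

/-- A consistent ordering `{A₀ = ∅', A₁, …, Aₙ}` of the finite sub-semilattice `L`. -/
structure ConsistentOrdering (𝒜 : Set (Set T)) (L : Finset (Set T)) (n : ℕ)
    (A : ℕ → Set T) : Prop where
  zero : A 0 = emptyPrime 𝒜
  first : A 1 = ⋂₀ ↑L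
  mem : ∀ i, 1 ≤ i → i ≤ n → A i ∈ L
  inj : ∀ i j, 1 ≤ i → i ≤ n → 1 ≤ j → j ≤ n → A i = A j → i = j
  surj : ∀ B ∈ L, ∃ i, 1 ≤ i ∧ i ≤ n ∧ A i = B
  consistent : ∀ i, 1 ≤ i → i ≤ n → ∀ B ∈ L, B ⊆ A i → B ≠ A i → ∃ j < i, A j = B

/-- `⋃_{j=1}^{i} A_j`. -/
def Uu (A : ℕ → Set T) (i : ℕ) : Set T := ⋃ j ∈ Finset.Icc 1 i, A j

/-- `⋃_{j=0}^{i} A_j`. -/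
def U0 (A : ℕ → Set T) (i : ℕ) : Set T := ⋃ j ∈ Finset.range (i + 1), A j

/-- The left neighbourhood `C_j = A_j ∖ ⋃_{l=0}^{j-1} A_l`. -/
def leftNbhd (A : ℕ → Set T) (j : ℕ) : Set T := A j \ ⋃ l ∈ Finset.range j, A l

/-- A (set-indexed) transition system `𝒬 = (Q_{BB'})_{B ⊆ B'}`. -/
def IsTransitionSystem (𝒜 : Set (Set T)) (Q : Set T → Set T → Kernel ℝ ℝ) : Prop :=
  (∀ B ∈ Au 𝒜, ∀ B' ∈ Au 𝒜, B ⊆ B' → IsMarkovKernel (Q B B')) ∧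
    (∀ B ∈ Au 𝒜, ∀ x : ℝ, Q B B x = Measure.dirac x) ∧
    (∀ B ∈ Au 𝒜, ∀ B' ∈ Au 𝒜, ∀ B'' ∈ Au 𝒜, B ⊆ B' → B' ⊆ B'' →
      ∀ (x : ℝ) (Γ : Set ℝ), MeasurableSet Γ →
        Q B B'' x Γ = ∫⁻ y, Q B' B'' y Γ ∂(Q B B' x))

/-- `X` is `𝒬`-Markov: `P[X_{B'} ∈ Γ | ℱ_B] = Q_{BB'}(X_B; Γ)` a.s. -/
def QMarkov (𝒜 : Set (Set T)) (P : Measure Ω) (X : Set T → Ω → ℝ)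
    (Q : Set T → Set T → Kernel ℝ ℝ) : Prop :=
  ∀ B ∈ Au 𝒜, ∀ B' ∈ Au 𝒜, B ⊆ B' → ∀ Γ : Set ℝ, MeasurableSet Γ →
    (P[fun ω => Γ.indicator (fun _ => (1 : ℝ)) (X B' ω) | filt 𝒜 X B]) =ᵐ[P]
      fun ω => (Q B B' (X B ω) Γ).toReal

/-- Iterated integration of the coordinates `i+1, …, i+m` of a path, each coordinate `j+1`
being integrated with respect to the kernel `κ j` applied at the coordinate `j`. -/
def stepInt (κ : ℕ → Kernel ℝ ℝ) : ℕ → ℕ → ((ℕ → ℝ) → ℝ≥0∞) → (ℕ → ℝ) → ℝ≥0∞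
  | _, 0, f, x => f x
  | i, m + 1, f, x =>
      ∫⁻ y, stepInt κ (i + 1) m f (Function.update x (i + 1) y) ∂(κ i (x i))

/-- The iterated integral
`∫ … ∫ f(x₀,…,xₙ) κ_{n-1}(x_{n-1}; dxₙ) ⋯ κ_0(x₀; dx₁) μ(dx₀)`. -/
def kiter (μ : Measure ℝ) (κ : ℕ → Kernel ℝ ℝ) (n : ℕ) (f : (ℕ → ℝ) → ℝ≥0∞) : ℝ≥0∞ :=
  ∫⁻ x₀, stepInt κ 0 n f (fun _ => x₀) ∂μ

/-- The sequence of kernels `Q_{∅'A₁}, Q_{A₁, A₁∪A₂}, …, Q_{⋃_{j<n}A_j, ⋃_{j≤n}A_j}`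
attached to a consistent ordering `A` by a set-indexed transition system `Q`. -/
def kerSeq (Q : Set T → Set T → Kernel ℝ ℝ) (A : ℕ → Set T) (i : ℕ) : Kernel ℝ ℝ :=
  Q (if i = 0 then A 0 else Uu A i) (Uu A (i + 1))

/-- The integrand `1_{Γ₀}(y₀) 1_{Γ₁}(y₁) ∏_{i=2}^{n} 1_{Γ_i}(y_{π(i)} - y_{π(i)-1})`. -/
def PermIntegrand (Γ : ℕ → Set ℝ) (π : ℕ → ℕ) (n : ℕ) (y : ℕ → ℝ) : ℝ≥0∞ :=
  (Γ 0).indicator 1 (y 0) * (Γ 1).indicator 1 (y 1) *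
    ∏ i ∈ Finset.Icc 2 n, (Γ i).indicator 1 (y (π i) - y (π i - 1))

/-- Assumption 1: the finite dimensional distributions built from `𝒬` over the left
neighbourhoods of a finite sub-semilattice do not depend on the consistent ordering. -/
def Assumption1 (𝒜 : Set (Set T)) (Q : Set T → Set T → Kernel ℝ ℝ) (μ : Measure ℝ) : Prop :=
  ∀ (L : Finset (Set T)) (n : ℕ) (A A' : ℕ → Set T) (π : Equiv.Perm ℕ),
    IsSubSemilattice 𝒜 L → ConsistentOrdering 𝒜 L n A → ConsistentOrdering 𝒜 L n A' →
    π 1 = 1 → (∀ i, ¬(1 ≤ i ∧ i ≤ n) → π i = i) →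
    (∀ i, 1 ≤ i → i ≤ n → A i = A' (π i)) →
    ∀ Γ : ℕ → Set ℝ, (∀ i, MeasurableSet (Γ i)) →
      kiter μ (kerSeq Q A) n (PermIntegrand Γ id n) =
        kiter μ (kerSeq Q A') n (PermIntegrand Γ π n)

/-- `X` has independent increments. -/
def IndepIncrements (𝒜 : Set (Set T)) (P : Measure Ω) (X : Set T → Ω → ℝ) : Prop :=
  ∀ (n : ℕ) (A B : ℕ → Set T),
    (∀ i < n, A i ∈ 𝒜) → (∀ i < n, B i ∈ Au 𝒜) →
    (∀ i < n, ∀ j < n, i ≠ j → Disjoint (A i \ B i) (A j \ B j)) →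
    iIndepFun (m := fun _ : Fin n => (inferInstance : MeasurableSpace ℝ))
      (fun i : Fin n => fun ω => X (A i ∪ B i) ω - X (B i) ω) P

/-- The trace `X^f` of `X` along the flow `f` is Markov with the one-dimensional
transition system `Qf`. -/
def QMarkovFlow (𝒜 : Set (Set T)) (P : Measure Ω) (X : Set T → Ω → ℝ)
    (a : ℝ) (f : ℝ → Set T) (Qf : ℝ → ℝ → Kernel ℝ ℝ) : Prop :=
  ∀ s t : ℝ, 0 ≤ s → s < t → t ≤ a → ∀ Γ : Set ℝ, MeasurableSet Γ →
    (P[fun ω => Γ.indicator (fun _ => (1 : ℝ)) (X (f t) ω) | filt 𝒜 X (f s)]) =ᵐ[P]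
      fun ω => (Qf s t (X (f s) ω) Γ).toReal

/-- A one-dimensional transition system on the time interval `[0,a]`. -/
def IsFlowTransition (a : ℝ) (Q : ℝ → ℝ → Kernel ℝ ℝ) : Prop :=
  (∀ s t : ℝ, 0 ≤ s → s < t → t ≤ a → IsMarkovKernel (Q s t)) ∧
    ∀ s t u : ℝ, 0 ≤ s → s < t → t < u → u ≤ a →
      ∀ (x : ℝ) (Γ : Set ℝ), MeasurableSet Γ →
        Q s u x Γ = ∫⁻ y, Q t u y Γ ∂(Q s t x)

/-- The simple flow `f` connects the sets of a finite sub-semilattice in the sense of the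
consistent ordering `A`, with partition `t` of `[0,a]`. -/
def Connects (𝒜 : Set (Set T)) (n : ℕ) (A : ℕ → Set T) (a : ℝ) (t : ℕ → ℝ)
    (f : ℝ → Set T) : Prop :=
  t 0 = 0 ∧ t n = a ∧ (∀ i < n, t i < t (i + 1)) ∧
    (∀ i ≤ n, f (t i) = Uu A i) ∧
    ∃ g : ℕ → ℝ → Set T,
      (∀ i < n, ∀ s ∈ Set.Icc (t i) (t (i + 1)), g (i + 1) s ∈ 𝒜) ∧
      (∀ i < n, ∀ s u : ℝ, t i ≤ s → s ≤ u → u ≤ t (i + 1) → g (i + 1) s ⊆ g (i + 1) u) ∧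
      (∀ i < n, g (i + 1) (t i) = A i ∧ g (i + 1) (t (i + 1)) = A (i + 1)) ∧
      (∀ i < n, ∀ s ∈ Set.Icc (t i) (t (i + 1)),
        f s = (⋃ j ∈ Finset.Icc 1 i, A j) ∪ g (i + 1) s)

/-- `ℱ_{∂B} = σ(X_A : A ∈ 𝒜, A ⊆ B, A ⊄ B°)`. -/
def filtBoundary (𝒜 : Set (Set T)) (X : Set T → Ω → ℝ) (B : Set T) : MeasurableSpace Ω :=
  ⨆ A ∈ {A | A ∈ 𝒜 ∧ A ⊆ B ∧ ¬ A ⊆ interior B}, sigOf (X A)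

/-- `ℱ_{B^c} = σ(X_A : A ∈ 𝒜, A ⊄ B)`. -/
def filtComp (𝒜 : Set (Set T)) (X : Set T → Ω → ℝ) (B : Set T) : MeasurableSpace Ω :=
  ⨆ A ∈ {A | A ∈ 𝒜 ∧ ¬ A ⊆ B}, sigOf (X A)

/-- The initial distribution of `X`: the law of `X_{∅'}`. -/
def InitialLaw (P : Measure Ω) (X : Set T → Ω → ℝ) (𝒜 : Set (Set T)) : Measure ℝ :=
  P.map (X (emptyPrime 𝒜))

/-- The measure `Q_{BB'}(x; ·) = F_{B'∖B}(· - x)`, i.e. the law of `X_{B'} - X_B + x`. -/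
def incLaw (P : Measure Ω) (X : Set T → Ω → ℝ) (B B' : Set T) (x : ℝ) : Measure ℝ :=
  P.map fun ω => X B' ω - X B ω + x


/-- Pull-out identity: `∫ ξ g = ∫ ξ E[g|m]` for an `m`-measurable factor `ξ`. -/
theorem pullOutAux {Ω : Type*} [m0 : MeasurableSpace Ω] (P : Measure Ω)
    [IsProbabilityMeasure P] {m : MeasurableSpace Ω} (hm : m ≤ m0)
    {ξ g : Ω → ℝ} (hξ : StronglyMeasurable[m] ξ) (hg : Integrable g P)
    (hξg : Integrable (fun ω => ξ ω * g ω) P) :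
    ∫ ω, ξ ω * g ω ∂P = ∫ ω, ξ ω * (P[g|m]) ω ∂P := by
  have h1 : P[fun ω => ξ ω * g ω|m] =ᵐ[P] fun ω => ξ ω * (P[g|m]) ω := by
    have := condExp_mul_of_stronglyMeasurable_left hξ hξg hg
    exact this
  rw [← integral_condExp hm]
  exact integral_congr_ae h1

theorem statement0Aux {Ω : Type*} (G' G K : MeasurableSpace Ω)
    [m0 : MeasurableSpace Ω] (P : Measure Ω)
    [IsProbabilityMeasure P] {m k : ℕ}
    (hG'G : G' ≤ G) (hG : G ≤ m0)
    (X : Ω → (Fin m → ℝ)) (Y : Ω → (Fin k → ℝ))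
    (hXm0 : Measurable[m0] X) (hY : Measurable[G] Y)
    (hG'K : G' ≤ K) (hKG : K ≤ G)
    (hYK : MeasurableSpace.comap Y inferInstance ≤ K)
    (hcond : ∀ f : (Fin m → ℝ) → ℝ, Measurable f → (∃ C, ∀ x, |f x| ≤ C) →
      (P[fun ω => f (X ω) | G]) =ᵐ[P] (P[fun ω => f (X ω) | G'])) :
    ∀ h : ((Fin m → ℝ) × (Fin k → ℝ)) → ℝ, Measurable h → (∃ C, ∀ x, |h x| ≤ C) →
      (P[fun ω => h (X ω, Y ω) | G]) =ᵐ[P]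
        (P[fun ω => h (X ω, Y ω) | K]) := by
  rintro h hh ⟨C, hC⟩
  have hYG : MeasurableSpace.comap Y inferInstance ≤ G := measurable_iff_comap_le.mp hY
  have hK : K ≤ m0 := hKG.trans hG
  have hYm : Measurable[m0] Y := hY.mono hG le_rfl
  have hZ : Measurable[m0] fun ω => (X ω, Y ω) := hXm0.prodMk hYm
  set H : Ω → ℝ := fun ω => h (X ω, Y ω) with hHdef
  have hHm : Measurable[m0] H := hh.comp hZ
  have hHint : Integrable H P := by
    refine (integrable_const C).mono' hHm.aestronglyMeasurable (ae_of_all _ fun ω => ?_)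
    simpa [Real.norm_eq_abs] using hC (X ω, Y ω)
  -- the key conditional expectation identity for functions of X, given K
  have hcondK : ∀ f : (Fin m → ℝ) → ℝ, Measurable f → (∃ C, ∀ x, |f x| ≤ C) →
      (P[fun ω => f (X ω)|K]) =ᵐ[P] (P[fun ω => f (X ω)|G']) := by
    intro f hf hfC
    calc P[fun ω => f (X ω)|K]
        =ᵐ[P] P[P[fun ω => f (X ω)|G]|K] := (condExp_condExp_of_le hKG hG).symm
      _ =ᵐ[P] P[P[fun ω => f (X ω)|G']|K] := condExp_congr_ae (hcond f hf hfC)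
      _ =ᵐ[P] P[fun ω => f (X ω)|G'] := by
          rw [condExp_of_stronglyMeasurable hK
            (stronglyMeasurable_condExp.mono hG'K) integrable_condExp]
  have hgm : AEStronglyMeasurable[G] (P[H|K]) P :=
    StronglyMeasurable.aestronglyMeasurable (stronglyMeasurable_condExp.mono hKG)
  have hgint : ∀ s, MeasurableSet[G] s → P s < ⊤ → IntegrableOn (P[H|K]) s P :=
    fun s _ _ => integrable_condExp.integrableOn
  refine (ae_eq_condExp_of_forall_setIntegral_eq hG hHint hgint
    (fun A hA _ => ?_) hgm).symm
  -- Fix a G-measurable set A; goal: ∫_A E[H|K] = ∫_A H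
  have hA0 : MeasurableSet[m0] A := hG A hA
  set W : Ω → ℝ := P[A.indicator (fun _ => (1 : ℝ))|K] with hWdef
  have hWsm : StronglyMeasurable[K] W := stronglyMeasurable_condExp
  have hWm : Measurable[m0] W := (hWsm.mono hK).measurable
  have hWint : Integrable W P := integrable_condExp
  have h1Aint : Integrable (A.indicator fun _ => (1 : ℝ)) P :=
    (integrable_const (1 : ℝ)).indicator hA0
  have hW0 : 0 ≤ᵐ[P] W :=
    condExp_nonneg (ae_of_all _ fun ω => Set.indicator_nonneg (fun _ _ => zero_le_one) ω)
  have hW1 : W ≤ᵐ[P] fun _ => (1 : ℝ) := by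
    have h1 : (A.indicator fun _ => (1 : ℝ)) ≤ᵐ[P] fun _ => (1 : ℝ) :=
      ae_of_all _ fun ω => Set.indicator_le_self' (fun _ _ => zero_le_one) ω
    have := condExp_mono h1Aint (integrable_const (1 : ℝ)) h1 (m := K)
    rwa [condExp_const hK] at this
  -- the rectangle identity
  have key : ∀ S : Set (Fin m → ℝ), MeasurableSet S → ∀ U : Set (Fin k → ℝ), MeasurableSet U →
      ∫ ω, S.indicator (fun _ => (1:ℝ)) (X ω) * U.indicator (fun _ => (1:ℝ)) (Y ω) * W ω ∂P
        = ∫ ω, S.indicator (fun _ => (1:ℝ)) (X ω) * U.indicator (fun _ => (1:ℝ)) (Y ω)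
            * A.indicator (fun _ => (1:ℝ)) ω ∂P := by
    intro S hS U hU
    set φ : Ω → ℝ := fun ω => S.indicator (fun _ => (1:ℝ)) (X ω) with hφdef
    set ψ : Ω → ℝ := fun ω => U.indicator (fun _ => (1:ℝ)) (Y ω) with hψdef
    have hφm : Measurable[m0] φ := (measurable_const.indicator hS).comp hXm0
    have hφb : ∀ ω, ‖φ ω‖ ≤ 1 := fun ω => by
      by_cases hx : X ω ∈ S <;> simp [hφdef, Set.indicator_apply, hx]
    have hφint : Integrable φ P :=
      (integrable_const (1:ℝ)).mono' hφm.aestronglyMeasurable (ae_of_all _ hφb)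
    have hψmY : Measurable[MeasurableSpace.comap Y inferInstance] ψ :=
      (measurable_const.indicator hU).comp (measurable_iff_comap_le.mpr le_rfl)
    have hψK : StronglyMeasurable[K] ψ := ((hψmY.mono hYK le_rfl)).stronglyMeasurable
    have hψG : StronglyMeasurable[G] ψ := ((hψmY.mono hYG le_rfl)).stronglyMeasurable
    have hψm : Measurable[m0] ψ := (hψK.mono hK).measurable
    have hψb : ∀ ω, ‖ψ ω‖ ≤ 1 := fun ω => by
      by_cases hy : Y ω ∈ U <;> simp [hψdef, Set.indicator_apply, hy]
    have h1Ab : ∀ ω, ‖A.indicator (fun _ => (1:ℝ)) ω‖ ≤ 1 := fun ω => by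
      by_cases hω : ω ∈ A <;> simp [Set.indicator_apply, hω]
    set E : Ω → ℝ := P[φ|G'] with hEdef
    have hEK : StronglyMeasurable[K] E := stronglyMeasurable_condExp.mono hG'K
    have hφbd : ∃ C, ∀ x, |S.indicator (fun _ => (1:ℝ)) x| ≤ C :=
      ⟨1, fun x => by by_cases hx : x ∈ S <;> simp [Set.indicator_apply, hx]⟩
    have hφK : (P[φ|K]) =ᵐ[P] E := hcondK _ (measurable_const.indicator hS) hφbd
    have hφG : (P[φ|G]) =ᵐ[P] E := hcond _ (measurable_const.indicator hS) hφbd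
    -- LHS
    have hint1 : Integrable (fun ω => ψ ω * W ω * φ ω) P := by
      refine (hWint.bdd_mul ((hψm.mul hφm).aestronglyMeasurable)
        (c := 1) (ae_of_all _ fun ω => ?_)).congr (ae_of_all _ fun ω => by simp only [Pi.mul_apply]; ring)
      calc ‖ψ ω * φ ω‖ = ‖ψ ω‖ * ‖φ ω‖ := norm_mul _ _
        _ ≤ 1 * 1 := mul_le_mul (hψb ω) (hφb ω) (norm_nonneg _) zero_le_one
        _ = 1 := one_mul 1
    have L1 : ∫ ω, φ ω * ψ ω * W ω ∂P = ∫ ω, ψ ω * W ω * (P[φ|K]) ω ∂P := by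
      rw [show (fun ω => φ ω * ψ ω * W ω) = fun ω => ψ ω * W ω * φ ω from
        funext fun ω => by ring]
      exact pullOutAux P hK (hψK.mul hWsm) hφint hint1
    have L2 : ∫ ω, ψ ω * W ω * (P[φ|K]) ω ∂P = ∫ ω, E ω * ψ ω * W ω ∂P := by
      refine integral_congr_ae ?_
      filter_upwards [hφK] with ω hω
      rw [hω]; ring
    have hEψK : StronglyMeasurable[K] fun ω => E ω * ψ ω := hEK.mul hψK
    have hintEψ1A : Integrable (fun ω => (E ω * ψ ω) * A.indicator (fun _ => (1:ℝ)) ω) P := by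
      refine (integrable_condExp.bdd_mul
        ((hψm.mul ((measurable_const.indicator hA0))).aestronglyMeasurable)
        (c := 1) (ae_of_all _ fun ω => ?_)).congr (ae_of_all _ fun ω => by simp [hEdef]; ring)
      calc ‖ψ ω * A.indicator (fun _ => (1:ℝ)) ω‖
          = ‖ψ ω‖ * ‖A.indicator (fun _ => (1:ℝ)) ω‖ := norm_mul _ _
        _ ≤ 1 * 1 := mul_le_mul (hψb ω) (h1Ab ω) (norm_nonneg _) zero_le_one
        _ = 1 := one_mul 1
    have L3 : ∫ ω, (E ω * ψ ω) * A.indicator (fun _ => (1:ℝ)) ω ∂P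
        = ∫ ω, (E ω * ψ ω) * W ω ∂P :=
      pullOutAux P hK hEψK h1Aint hintEψ1A
    -- RHS
    have hψ1AG : StronglyMeasurable[G] fun ω => ψ ω * A.indicator (fun _ => (1:ℝ)) ω :=
      hψG.mul ((measurable_const.indicator hA).stronglyMeasurable)
    have hint2 : Integrable (fun ω => ψ ω * A.indicator (fun _ => (1:ℝ)) ω * φ ω) P := by
      refine (hφint.bdd_mul
        ((hψm.mul (measurable_const.indicator hA0 : Measurable (A.indicator fun _ => (1:ℝ)))).aestronglyMeasurable)
        (c := 1) (ae_of_all _ fun ω => ?_)).congr (ae_of_all _ fun ω => by simp only [Pi.mul_apply])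
      calc ‖ψ ω * A.indicator (fun _ => (1:ℝ)) ω‖
          = ‖ψ ω‖ * ‖A.indicator (fun _ => (1:ℝ)) ω‖ := norm_mul _ _
        _ ≤ 1 * 1 := mul_le_mul (hψb ω) (h1Ab ω) (norm_nonneg _) zero_le_one
        _ = 1 := one_mul 1
    have R1 : ∫ ω, φ ω * ψ ω * A.indicator (fun _ => (1:ℝ)) ω ∂P
        = ∫ ω, ψ ω * A.indicator (fun _ => (1:ℝ)) ω * (P[φ|G]) ω ∂P := by
      rw [show (fun ω => φ ω * ψ ω * A.indicator (fun _ => (1:ℝ)) ω)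
          = fun ω => ψ ω * A.indicator (fun _ => (1:ℝ)) ω * φ ω from
        funext fun ω => by ring]
      exact pullOutAux P hG hψ1AG hφint hint2
    have R2 : ∫ ω, ψ ω * A.indicator (fun _ => (1:ℝ)) ω * (P[φ|G]) ω ∂P
        = ∫ ω, (E ω * ψ ω) * A.indicator (fun _ => (1:ℝ)) ω ∂P := by
      refine integral_congr_ae ?_
      filter_upwards [hφG] with ω hω
      rw [hω]; ring
    calc ∫ ω, φ ω * ψ ω * W ω ∂P
        = ∫ ω, ψ ω * W ω * (P[φ|K]) ω ∂P := L1
      _ = ∫ ω, E ω * ψ ω * W ω ∂P := L2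
      _ = ∫ ω, (E ω * ψ ω) * A.indicator (fun _ => (1:ℝ)) ω ∂P := L3.symm
      _ = ∫ ω, ψ ω * A.indicator (fun _ => (1:ℝ)) ω * (P[φ|G]) ω ∂P := R2.symm
      _ = ∫ ω, φ ω * ψ ω * A.indicator (fun _ => (1:ℝ)) ω ∂P := R1.symm
  -- measures
  set ρ : Ω → ENNReal := fun ω => ENNReal.ofReal (W ω) with hρdef
  have hρm : Measurable[m0] ρ := ENNReal.measurable_ofReal.comp hWm
  have hρ1 : ρ ≤ᵐ[P] fun _ => 1 := hW1.mono fun ω hω => by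
    simpa [hρdef] using ENNReal.ofReal_le_one.mpr hω
  haveI hfinw : IsFiniteMeasure (P.withDensity ρ) := by
    constructor
    rw [withDensity_apply _ MeasurableSet.univ, setLIntegral_univ]
    calc ∫⁻ ω, ρ ω ∂P ≤ ∫⁻ _, 1 ∂P := lintegral_mono_ae hρ1
      _ = P Set.univ := lintegral_one
      _ < ⊤ := measure_lt_top _ _
  set μ1 : Measure ((Fin m → ℝ) × (Fin k → ℝ)) :=
    (P.withDensity ρ).map (fun ω => (X ω, Y ω)) with hμ1
  set μ2 : Measure ((Fin m → ℝ) × (Fin k → ℝ)) :=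
    (P.restrict A).map (fun ω => (X ω, Y ω)) with hμ2
  haveI : IsFiniteMeasure μ1 := by
    constructor
    rw [hμ1, Measure.map_apply hZ MeasurableSet.univ]
    exact measure_lt_top _ _
  have hrect : ∀ S : Set (Fin m → ℝ), MeasurableSet S → ∀ U : Set (Fin k → ℝ), MeasurableSet U →
      μ1 (S ×ˢ U) = μ2 (S ×ˢ U) := by
    intro S hS U hU
    set B := (fun ω => (X ω, Y ω)) ⁻¹' (S ×ˢ U) with hBdef
    have hB : MeasurableSet[m0] B := hZ (hS.prod hU)
    have hiW : (fun ω => S.indicator (fun _ => (1:ℝ)) (X ω)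
          * U.indicator (fun _ => (1:ℝ)) (Y ω) * W ω) = B.indicator W := by
      funext ω
      by_cases hx : X ω ∈ S <;> by_cases hy : Y ω ∈ U <;>
        simp [Set.indicator_apply, hBdef, Set.mem_preimage, Set.mem_prod, hx, hy]
    have hiA : (fun ω => S.indicator (fun _ => (1:ℝ)) (X ω)
          * U.indicator (fun _ => (1:ℝ)) (Y ω) * A.indicator (fun _ => (1:ℝ)) ω)
          = B.indicator (A.indicator fun _ => (1:ℝ)) := by
      funext ω
      by_cases hx : X ω ∈ S <;> by_cases hy : Y ω ∈ U <;>
        simp [Set.indicator_apply, hBdef, Set.mem_preimage, Set.mem_prod, hx, hy]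
    have hkey' : ∫ ω in B, W ω ∂P = ∫ ω in B, A.indicator (fun _ => (1:ℝ)) ω ∂P := by
      rw [← integral_indicator hB, ← integral_indicator hB, ← hiW, ← hiA]
      exact key S hS U hU
    have h2 : μ2 (S ×ˢ U) = P (B ∩ A) := by
      rw [hμ2, Measure.map_apply hZ (hS.prod hU), Measure.restrict_apply hB]
    have h2' : ∫ ω in B, A.indicator (fun _ => (1:ℝ)) ω ∂P = (P (B ∩ A)).toReal := by
      rw [setIntegral_indicator hA0]
      simp [setIntegral_const, measureReal_def]
    have h1 : μ1 (S ×ˢ U) = ∫⁻ ω in B, ρ ω ∂P := by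
      rw [hμ1, Measure.map_apply hZ (hS.prod hU), withDensity_apply _ hB]
    have h1' : ∫⁻ ω in B, ρ ω ∂P = ENNReal.ofReal (∫ ω in B, W ω ∂P) :=
      (ofReal_integral_eq_lintegral_ofReal hWint.integrableOn (ae_restrict_of_ae hW0)).symm
    rw [h1, h1', hkey', h2', h2, ENNReal.ofReal_toReal (measure_ne_top _ _)]
  have hμeq : μ1 = μ2 := by
    refine ext_of_generate_finite _ generateFrom_prod.symm isPiSystem_prod ?_ ?_
    · rintro s ⟨S, hS, U, hU, rfl⟩
      exact hrect S hS U hU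
    · have := hrect Set.univ MeasurableSet.univ Set.univ MeasurableSet.univ
      simpa [Set.univ_prod_univ] using this
  -- conclusion
  have e1 : ∫ p, h p ∂μ1 = ∫ ω, W ω * H ω ∂P := by
    rw [hμ1, integral_map hZ.aemeasurable hh.aestronglyMeasurable]
    have hρ' : ρ = fun ω => (((fun ω => (W ω).toNNReal) ω : NNReal) : ENNReal) := rfl
    rw [hρ', integral_withDensity_eq_integral_smul hWm.real_toNNReal]
    refine integral_congr_ae ?_
    filter_upwards [hW0] with ω hω
    simp [NNReal.smul_def, Real.coe_toNNReal _ hω, hHdef]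
  have e2 : ∫ p, h p ∂μ2 = ∫ ω in A, H ω ∂P := by
    rw [hμ2, integral_map hZ.aemeasurable hh.aestronglyMeasurable]
  have c1 : ∫ ω in A, (P[H|K]) ω ∂P
      = ∫ ω, (P[H|K]) ω * A.indicator (fun _ => (1:ℝ)) ω ∂P := by
    rw [← integral_indicator hA0]
    refine integral_congr_ae (ae_of_all _ fun ω => ?_)
    by_cases hω : ω ∈ A <;> simp [Set.indicator_apply, hω]
  have cint : Integrable (fun ω => (P[H|K]) ω * A.indicator (fun _ => (1:ℝ)) ω) P := by
    refine (integrable_condExp.bdd_mul ((measurable_const.indicator hA0).aestronglyMeasurable)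
      (c := 1) (ae_of_all _ fun ω => ?_)).congr (ae_of_all _ fun ω => mul_comm _ _)
    by_cases hω : ω ∈ A <;> simp [Set.indicator_apply, hω]
  have c2 : ∫ ω, (P[H|K]) ω * A.indicator (fun _ => (1:ℝ)) ω ∂P
      = ∫ ω, (P[H|K]) ω * W ω ∂P :=
    pullOutAux P hK stronglyMeasurable_condExp h1Aint cint
  have c2' : ∫ ω, (P[H|K]) ω * W ω ∂P = ∫ ω, W ω * (P[H|K]) ω ∂P :=
    integral_congr_ae (ae_of_all _ fun ω => mul_comm _ _)
  have cintWH : Integrable (fun ω => W ω * H ω) P := by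
    refine (hWint.bdd_mul hHm.aestronglyMeasurable (c := C) (ae_of_all _ fun ω => ?_)).congr
      (ae_of_all _ fun ω => mul_comm _ _)
    simpa [Real.norm_eq_abs, hHdef] using hC (X ω, Y ω)
  have c3 : ∫ ω, W ω * H ω ∂P = ∫ ω, W ω * (P[H|K]) ω ∂P :=
    pullOutAux P hK hWsm hHint cintWH
  calc ∫ ω in A, (P[H|K]) ω ∂P
      = ∫ ω, (P[H|K]) ω * A.indicator (fun _ => (1:ℝ)) ω ∂P := c1
    _ = ∫ ω, W ω * (P[H|K]) ω ∂P := c2.trans c2'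
    _ = ∫ ω, W ω * H ω ∂P := c3.symm
    _ = ∫ p, h p ∂μ1 := e1.symm
    _ = ∫ p, h p ∂μ2 := by rw [hμeq]
    _ = ∫ ω in A, H ω ∂P := e2

/-- Lemma 2: if `E[f(X)|𝒢] = E[f(X)|𝒢']` a.s. for every bounded measurable
`f`, and `Y` is `𝒢`-measurable, then `E[h(X,Y)|𝒢] = E[h(X,Y)|𝒢' ∨ σ(Y)]` a.s. for every
bounded measurable `h`. -/
theorem statement0 {Ω : Type*} (G' G : MeasurableSpace Ω) [m0 : MeasurableSpace Ω] (P : Measure Ω)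
    [IsProbabilityMeasure P] {m k : ℕ}
    (hG'G : G' ≤ G) (hG : G ≤ m0)
    (X : Ω → (Fin m → ℝ)) (Y : Ω → (Fin k → ℝ))
    (hX : Measurable X) (hY : Measurable[G] Y)
    (hcond : ∀ f : (Fin m → ℝ) → ℝ, Measurable f → (∃ C, ∀ x, |f x| ≤ C) →
      (P[fun ω => f (X ω) | G]) =ᵐ[P] (P[fun ω => f (X ω) | G'])) :
    ∀ h : ((Fin m → ℝ) × (Fin k → ℝ)) → ℝ, Measurable h → (∃ C, ∀ x, |h x| ≤ C) →
      (P[fun ω => h (X ω, Y ω) | G]) =ᵐ[P]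
        (P[fun ω => h (X ω, Y ω) | G' ⊔ MeasurableSpace.comap Y inferInstance]) := by
  exact statement0Aux (m0 := m0) G' G (G' ⊔ MeasurableSpace.comap Y inferInstance) P hG'G hG X Y
    hX hY le_sup_left (sup_le hG'G (measurable_iff_comap_le.mp hY))
    le_sup_right hcond

end SetIndexedMarkov
end
end

section
/- Let ℱ₁, ℱ₂, ℱ₃, ℱ₄ be sub-σ-fields of a probability space (Ω, ℱ, P). If ℱ₁ and ℱ₃ are conditionally independent given ℱ₂, and ℱ₁ ∨ ℱ₂ and ℱ₄ are conditionally independent given ℱ₃, then ℱ₁ and ℱ₃ ∨ ℱ₄ are conditionally independent given ℱ₂. -/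
open MeasureTheory ProbabilityTheory Set
open scoped ENNReal

noncomputable section

namespace SetIndexedMarkov

variable {T : Type*} [TopologicalSpace T] {Ω : Type*} [mΩ : MeasurableSpace Ω]

/-! The proof runs through Doob's characterisation of conditional independence: for
sub-σ-fields of `ℱ`, `𝒢 ⊥ ℋ | 𝒦` holds iff `P[1_H | 𝒢 ∨ 𝒦] = P[1_H | 𝒦]` a.s. for every
`H ∈ ℋ`. Together with the tower property it turns `ℱ₁ ∨ ℱ₂ ⊥ ℱ₄ | ℱ₃` into
`ℱ₁ ⊥ ℱ₄ | ℱ₂ ∨ ℱ₃` (weak union). Then for `G ∈ ℱ₁` the two hypotheses give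
`P[1_G | ℱ₂ ∨ ℱ₃ ∨ ℱ₄] = P[1_G | ℱ₂ ∨ ℱ₃] = P[1_G | ℱ₂]`, which is the claim (contraction). -/

open MeasurableSpace

theorem _root_.IsPiSystem.image2_inter {α : Type*} {S T : Set (Set α)} (hS : IsPiSystem S)
    (hT : IsPiSystem T) : IsPiSystem (image2 (· ∩ ·) S T) := by
  rintro _ ⟨s₁, hs₁, t₁, ht₁, rfl⟩ _ ⟨s₂, hs₂, t₂, ht₂, rfl⟩ hst
  rw [inter_inter_inter_comm] at hst ⊢
  exact mem_image2_of_mem (hS _ hs₁ _ hs₂ (hst.mono inter_subset_left))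
    (hT _ ht₁ _ ht₂ (hst.mono inter_subset_right))

theorem _root_.MeasurableSpace.sup_eq_generateFrom_image2_inter {α : Type*}
    (m₁ m₂ : MeasurableSpace α) :
    m₁ ⊔ m₂ =
      generateFrom (image2 (· ∩ ·) {s | MeasurableSet[m₁] s} {t | MeasurableSet[m₂] t}) := by
  refine le_antisymm (sup_le (fun s hs => ?_) fun t ht => ?_) (generateFrom_le ?_)
  · exact measurableSet_generateFrom ⟨s, hs, univ, MeasurableSet.univ, inter_univ s⟩
  · exact measurableSet_generateFrom ⟨univ, MeasurableSet.univ, t, ht, univ_inter t⟩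
  · rintro _ ⟨s, hs, t, ht, rfl⟩
    exact ((le_sup_left : m₁ ≤ m₁ ⊔ m₂) s hs).inter ((le_sup_right : m₂ ≤ m₁ ⊔ m₂) t ht)

theorem _root_.MeasurableSpace.isPiSystem_image2_inter_measurableSet {α : Type*}
    (m₁ m₂ : MeasurableSpace α) :
    IsPiSystem (image2 (· ∩ ·) {s | MeasurableSet[m₁] s} {t | MeasurableSet[m₂] t}) :=
  (@isPiSystem_measurableSet _ m₁).image2_inter (@isPiSystem_measurableSet _ m₂)

section Integral

variable {α E : Type*} [NormedAddCommGroup E] [NormedSpace ℝ E] {m m₀ : MeasurableSpace α}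
  {μ : Measure α}

theorem _root_.MeasureTheory.setIntegral_eq_of_isPiSystem (hm : m ≤ m₀) {S : Set (Set α)}
    (hgen : m = generateFrom S) (hpi : IsPiSystem S) {f g : α → E} (hf : Integrable f μ)
    (hg : Integrable g μ) (huniv : ∫ x, f x ∂μ = ∫ x, g x ∂μ)
    (hS : ∀ s ∈ S, ∫ x in s, f x ∂μ = ∫ x in s, g x ∂μ) {s : Set α} (hs : MeasurableSet[m] s) :
    ∫ x in s, f x ∂μ = ∫ x in s, g x ∂μ := by
  induction s, hs using MeasurableSpace.induction_on_inter hgen hpi with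
  | empty => simp
  | basic s hs => exact hS s hs
  | compl s hs ih =>
    have hf_split := integral_add_compl (hm s hs) hf
    have hg_split := integral_add_compl (hm s hs) hg
    rw [ih] at hf_split
    exact add_left_cancel (hf_split.trans (huniv.trans hg_split.symm))
  | iUnion u hdisj hu ih =>
    rw [integral_iUnion (fun i => hm _ (hu i)) hdisj hf.integrableOn,
      integral_iUnion (fun i => hm _ (hu i)) hdisj hg.integrableOn]
    exact tsum_congr ih

theorem _root_.MeasureTheory.condExp_ae_eq_of_le_of_le_of_condExp_ae_eq [CompleteSpace E]
    [IsFiniteMeasure μ] {m₁ m₂ m₃ : MeasurableSpace α} (h₁₂ : m₁ ≤ m₂) (h₂₃ : m₂ ≤ m₃)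
    (h₃ : m₃ ≤ m₀) {f : α → E} (h : μ[f|m₃] =ᵐ[μ] μ[f|m₁]) : μ[f|m₂] =ᵐ[μ] μ[f|m₁] :=
  calc μ[f|m₂] =ᵐ[μ] μ[μ[f|m₃]|m₂] := (condExp_condExp_of_le h₂₃ h₃).symm
    _ =ᵐ[μ] μ[μ[f|m₁]|m₂] := condExp_congr_ae h
    _ = μ[f|m₁] := condExp_of_stronglyMeasurable (h₂₃.trans h₃)
        (stronglyMeasurable_condExp.mono h₁₂) integrable_condExp

theorem _root_.MeasureTheory.condExp_indicator_ae_eq_mul [IsFiniteMeasure μ] {F : α → ℝ}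
    (hF : StronglyMeasurable[m] F) (hFi : Integrable F μ) {s : Set α} (hs : MeasurableSet s) :
    μ[s.indicator F|m] =ᵐ[μ] μ[s.indicator fun _ => (1 : ℝ)|m] * F := by
  have hmul : s.indicator F = (s.indicator fun _ => (1 : ℝ)) * F := by
    ext x
    by_cases hx : x ∈ s <;> simp [hx]
  rw [hmul]
  exact condExp_mul_of_stronglyMeasurable_right hF (hmul ▸ hFi.indicator hs)
    ((integrable_const 1).indicator hs)

end Integral

section CondIndepGiven

variable {Ω : Type*} {G H H' K L : MeasurableSpace Ω} {mΩ : MeasurableSpace Ω} {P : Measure Ω}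

local notation:max "𝟏" s:max => Set.indicator s fun _ => (1 : ℝ)

theorem CondIndepGiven.symm (hGH : CondIndepGiven P G H K) : CondIndepGiven P H G K := by
  intro h g hh hg
  filter_upwards [hGH g h hg hh] with ω hω
  rw [inter_comm, hω, mul_comm]

variable [IsFiniteMeasure P]

theorem condExp_indicator_sup_ae_eq_of_inter (hG : G ≤ mΩ) (hK : K ≤ mΩ) {h : Set Ω}
    (hh : MeasurableSet h)
    (hfac : ∀ g, MeasurableSet[G] g → P[𝟏 (g ∩ h)|K] =ᵐ[P] fun ω => P[𝟏 g|K] ω * P[𝟏 h|K] ω) :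
    P[𝟏 h|G ⊔ K] =ᵐ[P] P[𝟏 h|K] := by
  have hGK : G ⊔ K ≤ mΩ := sup_le hG hK
  have hint : ∀ {s}, MeasurableSet s → Integrable (𝟏 s) P :=
    fun hs => (integrable_const 1).indicator hs
  refine (ae_eq_condExp_of_forall_setIntegral_eq hGK (hint hh)
    (fun s _ _ => integrable_condExp.integrableOn) (fun s hs _ => ?_)
    (stronglyMeasurable_condExp.mono (le_sup_right : K ≤ G ⊔ K)).aestronglyMeasurable).symm
  refine setIntegral_eq_of_isPiSystem hGK (sup_eq_generateFrom_image2_inter G K)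
    (isPiSystem_image2_inter_measurableSet G K) integrable_condExp (hint hh)
    (integral_condExp hK) ?_ hs
  rintro _ ⟨g, hg, k, hk, rfl⟩
  have hgh : 𝟏 (g ∩ h) = g.indicator (𝟏 h) := (indicator_indicator ..).symm
  simp only [inter_comm g k]
  calc ∫ ω in k ∩ g, P[𝟏 h|K] ω ∂P
      = ∫ ω in k, P[g.indicator (P[𝟏 h|K])|K] ω ∂P := by
        rw [setIntegral_condExp hK (integrable_condExp.indicator (hG g hg)) hk,
          setIntegral_indicator (hG g hg)]
    _ = ∫ ω in k, P[𝟏 (g ∩ h)|K] ω ∂P := by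
        refine integral_congr_ae (ae_restrict_of_ae ?_)
        filter_upwards [condExp_indicator_ae_eq_mul stronglyMeasurable_condExp integrable_condExp
          (hG g hg), hfac g hg] with ω hω hω'
        rw [hω, hω']
        rfl
    _ = ∫ ω in k ∩ g, 𝟏 h ω ∂P := by
        rw [setIntegral_condExp hK (hint ((hG g hg).inter hh)) hk, hgh,
          setIntegral_indicator (hG g hg)]

theorem condExp_indicator_inter_ae_eq_mul_of_sup (hG : G ≤ mΩ) (hK : K ≤ mΩ) {h : Set Ω}
    (hh : MeasurableSet h) (hsup : P[𝟏 h|G ⊔ K] =ᵐ[P] P[𝟏 h|K]) {g : Set Ω}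
    (hg : MeasurableSet[G] g) :
    P[𝟏 (g ∩ h)|K] =ᵐ[P] fun ω => P[𝟏 g|K] ω * P[𝟏 h|K] ω := by
  have hgh : 𝟏 (g ∩ h) = g.indicator (𝟏 h) := (indicator_indicator ..).symm
  have hgGK : MeasurableSet[G ⊔ K] g := (le_sup_left : G ≤ G ⊔ K) g hg
  calc P[𝟏 (g ∩ h)|K]
      =ᵐ[P] P[P[g.indicator (𝟏 h)|G ⊔ K]|K] := by
        rw [hgh]; exact (condExp_condExp_of_le le_sup_right (sup_le hG hK)).symm
    _ =ᵐ[P] P[g.indicator (P[𝟏 h|K])|K] := by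
        refine condExp_congr_ae ?_
        filter_upwards [condExp_indicator ((integrable_const (1 : ℝ)).indicator hh) hgGK, hsup]
          with ω hω hω'
        rw [hω]
        by_cases hωg : ω ∈ g <;> simp [hωg, hω']
    _ =ᵐ[P] P[𝟏 g|K] * P[𝟏 h|K] :=
        condExp_indicator_ae_eq_mul stronglyMeasurable_condExp integrable_condExp (hG g hg)

theorem condIndepGiven_iff_condExp_sup_ae_eq (hG : G ≤ mΩ) (hH : H ≤ mΩ) (hK : K ≤ mΩ) :
    CondIndepGiven P G H K ↔ ∀ h, MeasurableSet[H] h → P[𝟏 h|G ⊔ K] =ᵐ[P] P[𝟏 h|K] :=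
  ⟨fun hind h hh => condExp_indicator_sup_ae_eq_of_inter hG hK (hH h hh)
      fun g hg => hind g h hg hh,
    fun hsup _ h hg hh => condExp_indicator_inter_ae_eq_mul_of_sup hG hK (hH h hh) (hsup h hh) hg⟩

theorem CondIndepGiven.weak_union (hG : G ≤ mΩ) (hH : H ≤ mΩ) (hK : K ≤ mΩ) (hL : L ≤ mΩ)
    (hind : CondIndepGiven P (G ⊔ K) H L) : CondIndepGiven P G H (K ⊔ L) := by
  rw [condIndepGiven_iff_condExp_sup_ae_eq hG hH (sup_le hK hL), ← sup_assoc]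
  intro h hh
  have hL_eq := (condIndepGiven_iff_condExp_sup_ae_eq (sup_le hG hK) hH hL).1 hind h hh
  exact hL_eq.trans (condExp_ae_eq_of_le_of_le_of_condExp_ae_eq le_sup_right
    (sup_le_sup_right le_sup_right L) (sup_le (sup_le hG hK) hL) hL_eq).symm

theorem CondIndepGiven.contraction (hG : G ≤ mΩ) (hH : H ≤ mΩ) (hH' : H' ≤ mΩ) (hK : K ≤ mΩ)
    (hGH : CondIndepGiven P G H K) (hGH' : CondIndepGiven P G H' (K ⊔ H)) :
    CondIndepGiven P G (H ⊔ H') K := by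
  refine ((condIndepGiven_iff_condExp_sup_ae_eq (sup_le hH hH') hG hK).2 fun g hg => ?_).symm
  have hK_eq := (condIndepGiven_iff_condExp_sup_ae_eq hH hG hK).1 hGH.symm g hg
  have hKH_eq := (condIndepGiven_iff_condExp_sup_ae_eq hH' hG (sup_le hK hH)).1 hGH'.symm g hg
  rw [sup_comm K H] at hKH_eq
  rw [show H ⊔ H' ⊔ K = H' ⊔ (H ⊔ K) by ac_rfl]
  exact hKH_eq.trans hK_eq

end CondIndepGiven

/-- Lemma 4: if `ℱ₁ ⟂ ℱ₃ | ℱ₂` and `ℱ₁ ∨ ℱ₂ ⟂ ℱ₄ | ℱ₃`, then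
`ℱ₁ ⟂ ℱ₃ ∨ ℱ₄ | ℱ₂`. -/
theorem statement1 {Ω : Type*} [mΩ : MeasurableSpace Ω] (P : Measure Ω)
    [IsProbabilityMeasure P] (F1 F2 F3 F4 : MeasurableSpace Ω)
    (h1 : F1 ≤ mΩ) (h2 : F2 ≤ mΩ) (h3 : F3 ≤ mΩ) (h4 : F4 ≤ mΩ)
    (hA : CondIndepGiven (mΩ := mΩ) P F1 F3 F2)
    (hB : CondIndepGiven (mΩ := mΩ) P (F1 ⊔ F2) F4 F3) :
    CondIndepGiven (mΩ := mΩ) P F1 (F3 ⊔ F4) F2 :=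
  hA.contraction h1 h3 h4 h2 (hB.weak_union h1 h4 h2 h3)

end SetIndexedMarkov
end
end
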